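/- arXiv:1912.02028 — 4 statements merged into one kernel-verified Lean document; each statement's English description precedes it below -/
import Mathlib

section
/- Fix p ∈ (0,1) and consider the AWGN reward r(x) = (1/2)·ln(1+x), for which κ̄_{1/(1−p)}(y) = max((1+y)(1−p) − 1, 0) and η(y) := Σ_{i=1}^∞ max((1+y)(1−p)^{i−1} − 1, 0). For every x ≥ 0, let M̃ be the least positive integer m satisfying (1 + p(x+m))·(1−p)^m < 1 (such m exists), and set w := p(x + M̃)/(1 − (1−p)^{M̃}) − 1. Then w ≥ 0 and η(w) = x; that is, the explicit formula w gives the inverse of η, and hence the maximin optimal policy ω_AWGN(x) for unit channel coefficient. -/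
open Set Filter Topology Finset

/-!
Write `q = 1 - p` and `c = 1 + w`. If `c q^M < 1 ≤ c q^(M-1)`, exactly the first `M` terms of
`η(w) = ∑ max (c q^i - 1) 0` are nonnegative, so `η(w) = c (1 - q^M) / p - M`, which equals `x`
precisely for `c = p (x + M) / (1 - q^M)`. With this `c`, the two threshold inequalities
`c q^M < 1` and `1 ≤ c q^(M-1)` unfold to `M ∈ S` and `M - 1 ∉ S` for the set `S` of the
statement, so `M` must be its least element; `S` is nonempty because `(1 + p (x + m)) q^m → 0`.
-/

theorem tendsto_affine_mul_pow_atTop_nhds_zero (a b : ℝ) {q : ℝ} (hq0 : 0 ≤ q) (hq1 : q < 1) :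
    Tendsto (fun m : ℕ => (a + b * m) * q ^ m) atTop (𝓝 0) := by
  have h := ((tendsto_pow_atTop_nhds_zero_of_lt_one hq0 hq1).const_mul a).add
    ((tendsto_pow_const_mul_const_pow_of_lt_one 1 hq0 hq1).const_mul b)
  simp only [mul_zero, add_zero, pow_one] at h
  convert h using 2 with m
  ring

theorem tsum_max_zero_eq_sum_range {f : ℕ → ℝ} {M : ℕ} (hpos : ∀ i < M, 0 ≤ f i)
    (hneg : ∀ i, M ≤ i → f i ≤ 0) : ∑' i, max (f i) 0 = ∑ i ∈ range M, f i := by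
  rw [tsum_eq_sum (s := range M) fun i hi =>
    max_eq_right (hneg i (by simpa using hi))]
  exact sum_congr rfl fun i hi => max_eq_left (hpos i (by simpa using hi))

theorem tsum_max_mul_pow_sub_one {c q : ℝ} {n : ℕ} (hc : 0 ≤ c) (hq0 : 0 ≤ q) (hq1 : q ≤ 1)
    (hn : 1 ≤ c * q ^ n) (hn1 : c * q ^ (n + 1) ≤ 1) :
    ∑' i, max (c * q ^ i - 1) 0 = c * ∑ i ∈ range (n + 1), q ^ i - (n + 1) := by
  have hanti : Antitone fun i : ℕ => c * q ^ i := fun i j hij =>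
    mul_le_mul_of_nonneg_left (pow_le_pow_of_le_one hq0 hq1 hij) hc
  rw [tsum_max_zero_eq_sum_range (M := n + 1)]
  · simp [sum_sub_distrib, mul_sum]
  · intro i hi
    linarith [hanti (Nat.lt_succ_iff.mp hi)]
  · intro i hi
    linarith [hanti hi]

section AWGN

variable {p x : ℝ}

theorem exists_one_add_mul_pow_lt_one (hp : p ∈ Ioo (0 : ℝ) 1) (x : ℝ) :
    ∃ m : ℕ, 1 ≤ m ∧ (1 + p * (x + (m : ℝ))) * (1 - p) ^ m < 1 := by
  have h := tendsto_affine_mul_pow_atTop_nhds_zero (1 + p * x) p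
    (sub_nonneg.mpr hp.2.le) (sub_lt_self 1 hp.1)
  have hev := (eventually_ge_atTop 1).and (h.eventually (gt_mem_nhds one_pos))
  obtain ⟨m, hm1, hm⟩ := hev.exists
  exact ⟨m, hm1, by linarith⟩

theorem one_sub_one_sub_pow_pos (hp : p ∈ Ioo (0 : ℝ) 1) {M : ℕ} (hM : M ≠ 0) :
    0 < 1 - (1 - p) ^ M :=
  sub_pos.mpr (pow_lt_one₀ (by linarith [hp.2]) (by linarith [hp.1]) hM)

theorem one_le_div_one_sub_one_sub_pow (hp : p ∈ Ioo (0 : ℝ) 1) (hx : 0 ≤ x) {M : ℕ}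
    (hM : M ≠ 0) : 1 ≤ p * (x + M) / (1 - (1 - p) ^ M) := by
  have bernoulli := one_add_mul_le_pow (a := -p) (by linarith [hp.2]) M
  rw [← sub_eq_add_neg] at bernoulli
  rw [one_le_div (one_sub_one_sub_pow_pos hp hM)]
  nlinarith [mul_nonneg hp.1.le hx]

theorem div_one_sub_one_sub_pow_mul_pow_lt_one (hp : p ∈ Ioo (0 : ℝ) 1) {M : ℕ} (hM : M ≠ 0)
    (h : (1 + p * (x + M)) * (1 - p) ^ M < 1) :
    p * (x + M) / (1 - (1 - p) ^ M) * (1 - p) ^ M < 1 := by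
  rw [div_mul_eq_mul_div, div_lt_one (one_sub_one_sub_pow_pos hp hM)]
  linarith

theorem one_le_div_one_sub_one_sub_pow_mul_pow (hp : p ∈ Ioo (0 : ℝ) 1) {n : ℕ}
    (h : 1 ≤ (1 + p * (x + n)) * (1 - p) ^ n) :
    1 ≤ p * (x + (n + 1 : ℕ)) / (1 - (1 - p) ^ (n + 1)) * (1 - p) ^ n := by
  rw [div_mul_eq_mul_div, one_le_div (one_sub_one_sub_pow_pos hp n.add_one_ne_zero), pow_succ]
  push_cast
  linarith

theorem div_one_sub_one_sub_pow_mul_geom_sum (hp : p ∈ Ioo (0 : ℝ) 1) {M : ℕ} (hM : M ≠ 0) :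
    p * (x + M) / (1 - (1 - p) ^ M) * ∑ i ∈ range M, (1 - p) ^ i = x + M := by
  have hgeom := mul_neg_geom_sum (1 - p) M
  rw [sub_sub_cancel] at hgeom
  rw [div_mul_eq_mul_div, mul_right_comm, hgeom,
    mul_div_cancel_left₀ _ (one_sub_one_sub_pow_pos hp hM).ne']

end AWGN

/-- **Explicit maximin optimal policy for the AWGN reward** (Theorem 6, unit channel
coefficient). Fix `p ∈ (0,1)` and the AWGN reward `r x = (1/2) ln (1+x)`, for which
`η(y) = ∑_{i=1}^∞ max ((1+y)(1-p)^{i-1} - 1) 0`. For every `x ≥ 0` there is a least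
positive integer `M̃` with `(1 + p (x + M̃)) (1-p)^{M̃} < 1`, and
`w := p (x + M̃) / (1 - (1-p)^{M̃}) - 1` satisfies `w ≥ 0` and `η(w) = x`; that is, `w`
is the value `ω_AWGN(x)` of the maximin optimal policy. -/
theorem awgn_explicit_policy (p : ℝ) (hp : p ∈ Ioo (0 : ℝ) 1) (x : ℝ) (hx : 0 ≤ x) :
    ∃ Mt : ℕ,
      IsLeast {m : ℕ | 1 ≤ m ∧ (1 + p * (x + (m : ℝ))) * (1 - p) ^ m < 1} Mt ∧
      0 ≤ p * (x + (Mt : ℝ)) / (1 - (1 - p) ^ Mt) - 1 ∧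
      (∑' i : ℕ,
        max ((1 + (p * (x + (Mt : ℝ)) / (1 - (1 - p) ^ Mt) - 1)) * (1 - p) ^ i - 1) 0)
        = x := by
  set S := {m : ℕ | 1 ≤ m ∧ (1 + p * (x + (m : ℝ))) * (1 - p) ^ m < 1}
  have hleast := isLeast_csInf (show S.Nonempty from exists_one_add_mul_pow_lt_one hp x)
  obtain ⟨n, hn⟩ : ∃ n, sInf S = n + 1 := ⟨_, (Nat.succ_pred_eq_of_pos hleast.1.1).symm⟩
  rw [hn] at hleast
  have hpred : 1 ≤ (1 + p * (x + n)) * (1 - p) ^ n := by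
    by_contra! h
    have hn0 : n ≠ 0 := by
      rintro rfl
      simp only [CharP.cast_eq_zero, add_zero, pow_zero, mul_one, add_lt_iff_neg_left] at h
      nlinarith [mul_nonneg hp.1.le hx]
    exact absurd (hleast.2 ⟨Nat.one_le_iff_ne_zero.mpr hn0, h⟩) (by omega)
  have hc := one_le_div_one_sub_one_sub_pow hp hx n.add_one_ne_zero
  refine ⟨n + 1, hleast, sub_nonneg.mpr hc, ?_⟩
  rw [add_sub_cancel,
    tsum_max_mul_pow_sub_one (by linarith) (by linarith [hp.2]) (by linarith [hp.1])
    (one_le_div_one_sub_one_sub_pow_mul_pow hp hpred)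
    (div_one_sub_one_sub_pow_mul_pow_lt_one hp n.add_one_ne_zero hleast.1.2).le,
    div_one_sub_one_sub_pow_mul_geom_sum hp n.add_one_ne_zero]
  push_cast
  ring
end

section
/- Fix p ∈ (0,1) and x ≥ 0. Let M̃ be the least positive integer m satisfying (1 + p(x+m))·(1−p)^m < 1, and set w := p(x + M̃)/(1 − (1−p)^{M̃}) − 1 (the maximin optimal AWGN policy value ω_AWGN(x)). Then the ratio of marginal rewards satisfies (1 + p·x)/(1 + w) = (1 + p·x)·(1 − (1−p)^{M̃}) / (p·(x + M̃)) ≥ 1 − p·⌊1/p⌋·(1−p)^{⌊1/p⌋} ≥ 1 − e^{−1}; equivalently, r'(ω_AWGN(x)) ≥ (1 − e^{−1})·r'(p·x) for the AWGN reward r(x) = (1/2)·ln(1+x). -/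
open Set

/-- Key monotonicity lemma: `m (1-p)^m` is maximized over positive integers at
`N = ⌊1/p⌋`. -/
lemma awgn_lemA (p : ℝ) (hp0 : 0 < p) (hp1 : p < 1) (m : ℕ) (hm : 1 ≤ m) :
    (m : ℝ) * (1 - p) ^ m ≤ (⌊1 / p⌋₊ : ℝ) * (1 - p) ^ ⌊1 / p⌋₊ := by
  set N := ⌊1 / p⌋₊ with hN
  have hq0 : (0 : ℝ) < 1 - p := by linarith
  have hNle : (N : ℝ) ≤ 1 / p := Nat.floor_le (by positivity)
  have hNlt : 1 / p < (N : ℝ) + 1 := Nat.lt_floor_add_one _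
  rcases le_total m N with h | h
  · -- increasing up to N
    have key : ∀ k, m ≤ k → k ≤ N → (m : ℝ) * (1 - p) ^ m ≤ (k : ℝ) * (1 - p) ^ k := by
      intro k hk
      induction k, hk using Nat.le_induction with
      | base => intro _; exact le_rfl
      | succ k hmk ih =>
        intro hk1
        have hkN : k ≤ N := by omega
        have h1 := ih hkN
        have hcast : ((k : ℝ) + 1) ≤ (N : ℝ) := by exact_mod_cast hk1
        have hp1' : p * ((k : ℝ) + 1) ≤ 1 := by
          have h2 : ((k : ℝ) + 1) ≤ 1 / p := le_trans hcast hNle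
          calc p * ((k : ℝ) + 1) ≤ p * (1 / p) := by nlinarith
            _ = 1 := by field_simp
        have hqk : (0 : ℝ) < (1 - p) ^ k := pow_pos hq0 k
        have hstep : (k : ℝ) * (1 - p) ^ k ≤ ((k : ℝ) + 1) * (1 - p) ^ (k + 1) := by
          rw [pow_succ]
          nlinarith
        push_cast
        linarith
    exact key N h le_rfl
  · -- decreasing after N
    have key : ∀ k, N ≤ k → (k : ℝ) * (1 - p) ^ k ≤ (N : ℝ) * (1 - p) ^ N := by
      intro k hk
      induction k, hk using Nat.le_induction with
      | base => exact le_rfl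
      | succ k hNk ih =>
        have hcast : (N : ℝ) ≤ (k : ℝ) := by exact_mod_cast hNk
        have hp1' : 1 ≤ p * ((k : ℝ) + 1) := by
          have h2 : 1 / p < (k : ℝ) + 1 := lt_of_lt_of_le hNlt (by linarith)
          have : 1 / p * p < ((k : ℝ) + 1) * p := by nlinarith
          rw [one_div_mul_cancel (ne_of_gt hp0)] at this
          linarith
        have hqk : (0 : ℝ) < (1 - p) ^ k := pow_pos hq0 k
        have hstep : ((k : ℝ) + 1) * (1 - p) ^ (k + 1) ≤ (k : ℝ) * (1 - p) ^ k := by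
          rw [pow_succ]
          nlinarith
        push_cast
        linarith
    exact key m h

set_option maxHeartbeats 1000000 in
/-- **Key marginal-reward inequality for the AWGN maximin optimal policy** (from the
proof of Theorem 7). Fix `p ∈ (0,1)` and `x ≥ 0`; let `M̃` be the least positive
integer `m` with `(1 + p (x + m)) (1-p)^m < 1` and
`w := p (x + M̃) / (1 - (1-p)^{M̃}) - 1 = ω_AWGN(x)`. Then
`(1 + p x)/(1 + w) = (1 + p x)(1 - (1-p)^{M̃})/(p (x + M̃))
  ≥ 1 - p ⌊1/p⌋ (1-p)^{⌊1/p⌋} ≥ 1 - e⁻¹`, and equivalently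
`r'(ω_AWGN(x)) ≥ (1 - e⁻¹) r'(p x)` for `r x = (1/2) ln (1+x)`. -/
theorem awgn_marginal_reward_ratio (p x : ℝ) (hp : p ∈ Ioo (0 : ℝ) 1) (hx : 0 ≤ x)
    (Mt : ℕ)
    (hMt : IsLeast {m : ℕ | 1 ≤ m ∧ (1 + p * (x + (m : ℝ))) * (1 - p) ^ m < 1} Mt) :
    (1 + p * x) / (1 + (p * (x + (Mt : ℝ)) / (1 - (1 - p) ^ Mt) - 1)) =
        (1 + p * x) * (1 - (1 - p) ^ Mt) / (p * (x + (Mt : ℝ))) ∧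
      1 - p * (⌊1 / p⌋₊ : ℝ) * (1 - p) ^ (⌊1 / p⌋₊) ≤
        (1 + p * x) / (1 + (p * (x + (Mt : ℝ)) / (1 - (1 - p) ^ Mt) - 1)) ∧
      1 - Real.exp (-1) ≤ 1 - p * (⌊1 / p⌋₊ : ℝ) * (1 - p) ^ (⌊1 / p⌋₊) ∧
      (1 - Real.exp (-1)) * (1 / (2 * (1 + p * x))) ≤
        1 / (2 * (1 + (p * (x + (Mt : ℝ)) / (1 - (1 - p) ^ Mt) - 1))) := by
  obtain ⟨hp0, hp1⟩ := hp
  obtain ⟨⟨hM1, hMlt⟩, hMmin⟩ := hMt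
  have hq0 : (0 : ℝ) < 1 - p := by linarith
  have hq1 : (1 : ℝ) - p < 1 := by linarith
  have hqM : (1 - p) ^ Mt < 1 := pow_lt_one₀ hq0.le hq1 (by omega)
  have hB : (0 : ℝ) < 1 - (1 - p) ^ Mt := by linarith
  have hMpos : (0 : ℝ) < (Mt : ℝ) := by exact_mod_cast Nat.pos_of_ne_zero (by omega)
  have hA : (0 : ℝ) < p * (x + (Mt : ℝ)) := by positivity
  have e1 : 1 + (p * (x + (Mt : ℝ)) / (1 - (1 - p) ^ Mt) - 1)
      = p * (x + (Mt : ℝ)) / (1 - (1 - p) ^ Mt) := by ring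
  -- first conjunct
  have conj1 : (1 + p * x) / (1 + (p * (x + (Mt : ℝ)) / (1 - (1 - p) ^ Mt) - 1)) =
      (1 + p * x) * (1 - (1 - p) ^ Mt) / (p * (x + (Mt : ℝ))) := by
    rw [e1, div_div_eq_mul_div]
  -- set up m with Mt = m + 1
  obtain ⟨m, rfl⟩ : ∃ m, Mt = m + 1 := ⟨Mt - 1, by omega⟩
  set N := ⌊1 / p⌋₊ with hN
  have ht : (0 : ℝ) < (1 - p) ^ m := pow_pos hq0 m
  have ht1 : (1 - p) ^ m ≤ 1 := pow_le_one₀ hq0.le hq1.le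
  have hpow : (1 - p) ^ (m + 1) = (1 - p) * (1 - p) ^ m := by rw [pow_succ]; ring
  -- minimality at m
  have h2 : 1 ≤ (1 + p * (x + (m : ℝ))) * (1 - p) ^ m := by
    rcases Nat.eq_zero_or_pos m with h0 | h0
    · subst h0
      simp only [Nat.cast_zero, add_zero, pow_zero, mul_one]
      nlinarith [mul_nonneg hp0.le hx]
    · by_contra h
      push_neg at h
      have : m + 1 ≤ m := hMmin ⟨h0, h⟩
      omega
  -- strict inequality at m+1
  have h1 : (1 + p * (x + ((m : ℝ) + 1))) * ((1 - p) * (1 - p) ^ m) < 1 := by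
    have h := hMlt
    rw [hpow] at h
    push_cast at h
    convert h using 2
  -- Lemma A instances
  have hKpos : (0 : ℝ) ≤ (N : ℝ) * (1 - p) ^ N := by positivity
  have h3 : (m : ℝ) * (1 - p) ^ m ≤ (N : ℝ) * (1 - p) ^ N := by
    rcases Nat.eq_zero_or_pos m with h0 | h0
    · subst h0; simpa using hKpos
    · exact awgn_lemA p hp0 hp1 m h0
  have h4 : ((m : ℝ) + 1) * ((1 - p) * (1 - p) ^ m) ≤ (N : ℝ) * (1 - p) ^ N := by
    have h := awgn_lemA p hp0 hp1 (m + 1) (by omega)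
    rw [hpow] at h
    push_cast at h
    linarith
  -- the central polynomial inequality
  have hG : (1 - p * ((N : ℝ) * (1 - p) ^ N)) * (p * (x + ((m : ℝ) + 1))) ≤
      (1 + p * x) * (1 - (1 - p) * (1 - p) ^ m) := by
    have hs0 : 0 ≤ p * x := by positivity
    have hm0 : (0 : ℝ) ≤ (m : ℝ) := Nat.cast_nonneg m
    have h2' : (0 : ℝ) ≤ (1 + p * x + p * (m : ℝ)) * (1 - p) ^ m - 1 := by nlinarith [h2]
    have h1' : (0 : ℝ) <
        1 - (1 + p * x + p * (m : ℝ) + p) * ((1 - p) * (1 - p) ^ m) := by nlinarith [h1]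
    have hqt1 : (1 - p) * (1 - p) ^ m < 1 := by nlinarith
    rcases le_or_gt ((1 - p) * (1 - p) ^ m) (p * ((N : ℝ) * (1 - p) ^ N)) with hc | hc
    · have P1 : (0 : ℝ) ≤ ((1 + p * x + p * (m : ℝ)) * (1 - p) ^ m - 1) *
          (p * ((N : ℝ) * (1 - p) ^ N) - (1 - p) * (1 - p) ^ m) :=
        mul_nonneg h2' (by linarith)
      have P2 : (0 : ℝ) ≤ p * ((1 - (1 - p) * (1 - p) ^ m) *
          ((N : ℝ) * (1 - p) ^ N - (m : ℝ) * (1 - p) ^ m)) := by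
        apply mul_nonneg hp0.le
        exact mul_nonneg (by linarith) (by linarith)
      nlinarith [P1, P2, ht]
    · have P1 : (0 : ℝ) ≤ (1 - (1 + p * x + p * (m : ℝ) + p) * ((1 - p) * (1 - p) ^ m)) *
          ((1 - p) * (1 - p) ^ m - p * ((N : ℝ) * (1 - p) ^ N)) :=
        mul_nonneg h1'.le (by linarith)
      have P2 : (0 : ℝ) ≤ p * ((1 - (1 - p) * (1 - p) ^ m) *
          ((N : ℝ) * (1 - p) ^ N - ((m : ℝ) + 1) * ((1 - p) * (1 - p) ^ m))) := by
        apply mul_nonneg hp0.le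
        exact mul_nonneg (by linarith) (by linarith)
      have hqt0 : (0 : ℝ) < (1 - p) * (1 - p) ^ m := by positivity
      nlinarith [P1, P2, hqt0]
  -- middle inequality
  have hA' : (0 : ℝ) < p * (x + ((m : ℝ) + 1)) := by push_cast at hA; exact hA
  have conj2 : 1 - p * (N : ℝ) * (1 - p) ^ N ≤
      (1 + p * x) / (1 + (p * (x + ((m + 1 : ℕ) : ℝ)) / (1 - (1 - p) ^ (m + 1)) - 1)) := by
    rw [e1, div_div_eq_mul_div]
    have hcast : ((m + 1 : ℕ) : ℝ) = (m : ℝ) + 1 := by push_cast; ring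
    rw [hcast, le_div_iff₀ hA', hpow]
    nlinarith [hG]
  -- third conjunct : p * N * (1-p)^N ≤ exp (-1)
  have conj3 : p * (N : ℝ) * (1 - p) ^ N ≤ Real.exp (-1) := by
    have ha : 1 - p ≤ Real.exp (-p) := by
      have := Real.add_one_le_exp (-p)
      linarith
    have hb : (1 - p) ^ N ≤ Real.exp (-p) ^ N := pow_le_pow_left₀ hq0.le ha N
    have hc : Real.exp (-p) ^ N = Real.exp (-(p * (N : ℝ))) := by
      rw [← Real.exp_nat_mul]; ring_nf
    have hT0 : 0 ≤ p * (N : ℝ) := by positivity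
    have hd : p * (N : ℝ) ≤ Real.exp (p * (N : ℝ) - 1) := by
      have := Real.add_one_le_exp (p * (N : ℝ) - 1)
      linarith
    have he : p * (N : ℝ) * Real.exp (-(p * (N : ℝ))) ≤
        Real.exp (p * (N : ℝ) - 1) * Real.exp (-(p * (N : ℝ))) :=
      mul_le_mul_of_nonneg_right hd (Real.exp_pos _).le
    rw [← Real.exp_add] at he
    have hf : p * (N : ℝ) - 1 + -(p * (N : ℝ)) = -1 := by ring
    rw [hf] at he
    calc p * (N : ℝ) * (1 - p) ^ N ≤ p * (N : ℝ) * Real.exp (-(p * (N : ℝ))) := by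
          apply mul_le_mul_of_nonneg_left _ hT0
          rw [← hc]; exact hb
      _ ≤ Real.exp (-1) := he
  refine ⟨conj1, conj2, by linarith, ?_⟩
  -- fourth conjunct
  have hw : (0 : ℝ) < 1 + (p * (x + ((m + 1 : ℕ) : ℝ)) / (1 - (1 - p) ^ (m + 1)) - 1) := by
    rw [e1]
    exact div_pos hA hB
  have h1px : (0 : ℝ) < 1 + p * x := by positivity
  have hRge : 1 - Real.exp (-1) ≤
      (1 + p * x) / (1 + (p * (x + ((m + 1 : ℕ) : ℝ)) / (1 - (1 - p) ^ (m + 1)) - 1)) := by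
    calc 1 - Real.exp (-1) ≤ 1 - p * (N : ℝ) * (1 - p) ^ N := by linarith
      _ ≤ _ := conj2
  have hkey : (1 - Real.exp (-1)) *
      (1 + (p * (x + ((m + 1 : ℕ) : ℝ)) / (1 - (1 - p) ^ (m + 1)) - 1)) ≤ 1 + p * x :=
    (le_div_iff₀ hw).mp hRge
  rw [mul_one_div, div_le_div_iff₀ (by positivity) (by positivity)]
  nlinarith [hkey, hw]
end

section
/- Let f : [0,∞) → [0,∞) be continuous and strictly decreasing, with limit f(∞) := lim_{x→∞} f(x). Let s satisfy 1 < s and s·f(∞) < f(0), let x₀ be the unique point with f(x₀) = f(0)/s, and suppose g : [x₀, ∞) → [0,∞) satisfies f(g(x)) = s·f(x) for every x ≥ x₀ and g is convex on [x₀, ∞). Then f(∞) = 0. -/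
open Set Filter

/-! If `L > 0`, then `f (g x) = s * f x ≥ s * L` keeps `g` below any `d ≥ 0` with `f d < s * L`,
so `g` is bounded above. But `g` is strictly increasing, because `f` is strictly decreasing, and a
convex function on a half-line that is bounded above is nonincreasing. The case `L < 0` is ruled
out by passing to the limit in `L ≤ f (g x) = s * f x`, which gives `L ≤ s * L`. -/

theorem AntitoneOn.le_of_tendsto_atTop {α β : Type*} [Preorder α] [IsDirectedOrder α]
    [TopologicalSpace β] [Preorder β] [OrderClosedTopology β] {f : α → β} {a x : α} {L : β}
    (hf : AntitoneOn f (Ici a)) (hL : Tendsto f atTop (nhds L)) (hx : x ∈ Ici a) : L ≤ f x := by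
  have : Nonempty α := ⟨x⟩
  refine le_of_tendsto hL ?_
  filter_upwards [eventually_ge_atTop x] with y hy
  exact hf hx (mem_Ici.2 (le_trans hx hy)) hy

theorem StrictAntiOn.strictMonoOn_of_comp {α β γ : Type*} [Preorder α] [LinearOrder β]
    [Preorder γ] {f : β → γ} {g : α → β} {s : Set β} {t : Set α} (hf : StrictAntiOn f s)
    (hg : MapsTo g t s) (hfg : StrictAntiOn (f ∘ g) t) : StrictMonoOn g t :=
  fun _ hx _ hy hxy => (hf.lt_iff_gt (hg hy) (hg hx)).1 (hfg hx hy hxy)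

section Convex

variable {𝕜 : Type*} [Field 𝕜] [LinearOrder 𝕜] [IsStrictOrderedRing 𝕜] {a : 𝕜} {g : 𝕜 → 𝕜}

theorem ConvexOn.antitoneOn_of_bddAbove (hg : ConvexOn 𝕜 (Ici a) g)
    (hbdd : BddAbove (g '' Ici a)) : AntitoneOn g (Ici a) := by
  -- a secant of slope `m > 0` through `x < y` forces `g z ≥ g y + m * (z - y)` for `z > y`
  intro x hx y hy hxy
  by_contra! hlt
  obtain ⟨B, hB⟩ := hbdd
  have hxy' : x < y := hxy.lt_of_ne (by rintro rfl; exact hlt.false)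
  set m := (g y - g x) / (y - x)
  have hm : 0 < m := div_pos (sub_pos.2 hlt) (sub_pos.2 hxy')
  have hgyB : g y ≤ B := hB (mem_image_of_mem g hy)
  set z := y + (B - g y + 1) / m with hz_def
  have hyz : y < z := lt_add_of_pos_right y (div_pos (by linarith) hm)
  have hz : z ∈ Ici a := mem_Ici.2 (le_trans hy (le_of_lt hyz))
  have hslope : m ≤ (g z - g y) / (z - y) := hg.slope_mono_adjacent hx hz hxy' hyz
  rw [le_div_iff₀ (sub_pos.2 hyz), hz_def, add_sub_cancel_left,
    mul_div_cancel₀ _ hm.ne'] at hslope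
  linarith [hB (mem_image_of_mem g hz)]

end Convex

theorem decreasing_convex_conjugate_tendsto_zero_general
    (f : ℝ → ℝ) (L : ℝ)
    (hf_anti : StrictAntiOn f (Ici (0 : ℝ)))
    (hL : Tendsto f atTop (nhds L))
    (s : ℝ) (hs : 1 < s)
    (x₀ : ℝ) (hx₀_nonneg : 0 ≤ x₀)
    (g : ℝ → ℝ)
    (hg_nonneg : ∀ x : ℝ, x₀ ≤ x → 0 ≤ g x)
    (hg_spec : ∀ x : ℝ, x₀ ≤ x → f (g x) = s * f x)
    (hg_convex : ConvexOn ℝ (Ici x₀) g) :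
    L = 0 := by
  have hs0 : 0 < s := zero_lt_one.trans hs
  have hfL : ∀ x : ℝ, 0 ≤ x → L ≤ f x := fun x hx => hf_anti.antitoneOn.le_of_tendsto_atTop hL hx
  have hL_nonneg : 0 ≤ L := by
    have : L ≤ s * L := ge_of_tendsto (hL.const_mul s) <| by
      filter_upwards [eventually_ge_atTop x₀] with x hx
      exact hg_spec x hx ▸ hfL _ (hg_nonneg x hx)
    nlinarith
  have hg_mono : StrictMonoOn g (Ici x₀) := by
    refine hf_anti.strictMonoOn_of_comp (fun x hx => hg_nonneg x hx) fun x hx y hy hxy => ?_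
    simp only [Function.comp_apply, hg_spec x hx, hg_spec y hy]
    exact mul_lt_mul_of_pos_left (hf_anti (hx₀_nonneg.trans hx) (hx₀_nonneg.trans hy) hxy) hs0
  by_contra hL0
  have hLpos : 0 < L := hL_nonneg.lt_of_ne' hL0
  obtain ⟨d, hfd, hd⟩ := ((hL.eventually_lt_const (lt_mul_left hLpos hs)).and
    (eventually_ge_atTop 0)).exists
  have hg_bdd : BddAbove (g '' Ici x₀) := ⟨d, forall_mem_image.2 fun x hx => le_of_lt <|
    (hf_anti.lt_iff_gt hd (hg_nonneg x hx)).1 <| by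
      rw [hg_spec x hx]
      nlinarith [hfL x (hx₀_nonneg.trans hx)]⟩
  have hx₁ : x₀ + 1 ∈ Ici x₀ := mem_Ici.2 (lt_add_one x₀).le
  exact (hg_convex.antitoneOn_of_bddAbove hg_bdd self_mem_Ici hx₁ (lt_add_one x₀).le).not_gt
    (hg_mono self_mem_Ici hx₁ (lt_add_one x₀))

/-- **A decreasing function with a convex `f⁻¹ ∘ (s·f)` tends to zero** (Proposition 8).
Let `f : [0,∞) → [0,∞)` be continuous and strictly decreasing with limit `L` at `+∞`.
Let `1 < s` with `s·L < f 0`, let `x₀` be the unique point with `f x₀ = f 0 / s`, and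
suppose `g : [x₀, ∞) → [0,∞)` satisfies `f (g x) = s · f x` for every `x ≥ x₀` and is
convex on `[x₀, ∞)`. Then `L = 0`. -/
theorem decreasing_convex_conjugate_tendsto_zero
    (f : ℝ → ℝ) (L : ℝ)
    (hf_cont : ContinuousOn f (Ici (0 : ℝ)))
    (hf_anti : StrictAntiOn f (Ici (0 : ℝ)))
    (hf_nonneg : ∀ x : ℝ, 0 ≤ x → 0 ≤ f x)
    (hL : Tendsto f atTop (nhds L))
    (s : ℝ) (hs : 1 < s) (hsL : s * L < f 0)
    (x₀ : ℝ) (hx₀_nonneg : 0 ≤ x₀) (hx₀_spec : f x₀ = f 0 / s)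
    (g : ℝ → ℝ)
    (hg_nonneg : ∀ x : ℝ, x₀ ≤ x → 0 ≤ g x)
    (hg_spec : ∀ x : ℝ, x₀ ≤ x → f (g x) = s * f x)
    (hg_convex : ConvexOn ℝ (Ici x₀) g) :
    L = 0 :=
  decreasing_convex_conjugate_tendsto_zero_general f L hf_anti hL s hs x₀ hx₀_nonneg g hg_nonneg
    hg_spec hg_convex
end

section
/- Let a < b be real numbers and let g : ℝ → ℝ be Lebesgue-integrable on [a,b]. Suppose there is a measurable set A ⊆ [a,b] whose complement in [a,b] has Lebesgue measure zero, such that g is nondecreasing on A (i.e., for all x, y ∈ A with x ≤ y, g(x) ≤ g(y)). Then the function f(x) := ∫_a^x g(t) dt is convex on [a,b]. Likewise, if g is nonincreasing on such a set A, then f is concave on [a,b]. -/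
open Set MeasureTheory

/-! For `x < y < z` in `[a, b]`, the points of the conull set `A` are dense, so monotonicity of `g`
on `A` yields a constant `c` with `g ≤ c` a.e. on `[x, y]` and `c ≤ g` a.e. on `[y, z]`. Hence the
slope of `x ↦ ∫_a^x g` over `[x, y]` is at most `c`, which is at most its slope over `[y, z]`. -/

theorem nonempty_inter_of_measure_diff_eq_zero {α : Type*} [MeasurableSpace α] {μ : Measure α}
    {s A : Set α} (hA : μ (s \ A) = 0) (hs : μ s ≠ 0) : (A ∩ s).Nonempty := by
  by_contra h
  refine hs (measure_mono_null (fun x hx => ?_) hA)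
  exact ⟨hx, fun hxA => h ⟨x, hxA, hx⟩⟩

theorem ae_restrict_of_forall_mem_inter {α : Type*} [MeasurableSpace α]
    {μ : Measure α} {s A : Set α} {p : α → Prop} (hs : MeasurableSet s) (hA : μ (s \ A) = 0)
    (h : ∀ x ∈ A ∩ s, p x) : ∀ᵐ x ∂μ.restrict s, p x := by
  refine (ae_restrict_iff' hs).2 (measure_mono_null (fun x hx => ?_) hA)
  obtain ⟨hxs, hpx⟩ := Classical.not_imp.1 hx
  exact ⟨hxs, fun hxA => hpx (h x ⟨hxA, hxs⟩)⟩

theorem MonotoneOn.exists_separating_value {α β : Type*} [Preorder α]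
    [ConditionallyCompleteLattice β] {g : α → β} {A S T : Set α} (hg : MonotoneOn g A)
    (hS : S ⊆ A) (hT : T ⊆ A) (hSne : S.Nonempty) (hTne : T.Nonempty)
    (hST : ∀ s ∈ S, ∀ t ∈ T, s ≤ t) : ∃ c, (∀ s ∈ S, g s ≤ c) ∧ ∀ t ∈ T, c ≤ g t := by
  obtain ⟨t₀, ht₀⟩ := hTne
  have hbdd : BddAbove (g '' S) :=
    ⟨g t₀, forall_mem_image.2 fun s hs => hg (hS hs) (hT ht₀) (hST s hs t₀ ht₀)⟩
  refine ⟨sSup (g '' S), fun s hs => le_csSup hbdd (mem_image_of_mem g hs),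
    fun t ht => csSup_le (hSne.image g) (forall_mem_image.2 fun s hs => ?_)⟩
  exact hg (hS hs) (hT ht) (hST s hs t ht)

namespace intervalIntegral

variable {g : ℝ → ℝ} {x y c : ℝ}

theorem integral_le_mul_of_ae_le (hxy : x ≤ y) (hg : IntervalIntegrable g volume x y)
    (h : ∀ᵐ t ∂volume.restrict (Icc x y), g t ≤ c) : ∫ t in x..y, g t ≤ c * (y - x) := by
  calc ∫ t in x..y, g t ≤ ∫ _ in x..y, c :=
        integral_mono_ae_restrict hxy hg intervalIntegrable_const h
    _ = c * (y - x) := by rw [integral_const, smul_eq_mul, mul_comm]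

theorem mul_le_integral_of_ae_le (hxy : x ≤ y) (hg : IntervalIntegrable g volume x y)
    (h : ∀ᵐ t ∂volume.restrict (Icc x y), c ≤ g t) : c * (y - x) ≤ ∫ t in x..y, g t := by
  calc c * (y - x) = ∫ _ in x..y, c := by rw [integral_const, smul_eq_mul, mul_comm]
    _ ≤ ∫ t in x..y, g t := integral_mono_ae_restrict hxy intervalIntegrable_const hg h

end intervalIntegral

open intervalIntegral in
theorem convexOn_intervalIntegral_of_ae_monotoneOn {a b : ℝ} {g : ℝ → ℝ} {A : Set ℝ}
    (hg : IntegrableOn g (Icc a b)) (hA : volume (Icc a b \ A) = 0) (hmono : MonotoneOn g A) :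
    ConvexOn ℝ (Icc a b) fun x => ∫ t in a..x, g t := by
  have hint {u v : ℝ} (hu : u ∈ Icc a b) (hv : v ∈ Icc a b) : IntervalIntegrable g volume u v :=
    (hg.mono_set (uIcc_subset_Icc hu hv)).intervalIntegrable
  have hnull {u v : ℝ} (hu : u ∈ Icc a b) (hv : v ∈ Icc a b) : volume (Icc u v \ A) = 0 :=
    measure_mono_null (sdiff_subset_sdiff_left (Icc_subset_Icc hu.1 hv.2)) hA
  have hne {u v : ℝ} (hu : u ∈ Icc a b) (hv : v ∈ Icc a b) (huv : u < v) :
      (A ∩ Icc u v).Nonempty :=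
    nonempty_inter_of_measure_diff_eq_zero (hnull hu hv) (by simp [huv])
  refine convexOn_of_slope_mono_adjacent (convex_Icc a b) fun {x y z} hx hz hxy hyz => ?_
  have hy : y ∈ Icc a b := ⟨hx.1.trans hxy.le, hyz.le.trans hz.2⟩
  obtain ⟨c, hleft, hright⟩ := hmono.exists_separating_value inter_subset_left inter_subset_left
    (hne hx hy hxy) (hne hy hz hyz) fun s hs t ht => hs.2.2.trans ht.2.1
  have hxy_le : ∫ t in x..y, g t ≤ c * (y - x) :=
    integral_le_mul_of_ae_le hxy.le (hint hx hy) <|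
      ae_restrict_of_forall_mem_inter measurableSet_Icc (hnull hx hy) hleft
  have hyz_ge : c * (z - y) ≤ ∫ t in y..z, g t :=
    mul_le_integral_of_ae_le hyz.le (hint hy hz) <|
      ae_restrict_of_forall_mem_inter measurableSet_Icc (hnull hy hz) hright
  have ha : a ∈ Icc a b := ⟨le_rfl, hx.1.trans hx.2⟩
  simp only [integral_interval_sub_left (hint ha hy) (hint ha hx),
    integral_interval_sub_left (hint ha hz) (hint ha hy)]
  calc (∫ t in x..y, g t) / (y - x) ≤ c := (div_le_iff₀ (sub_pos.2 hxy)).2 hxy_le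
    _ ≤ (∫ t in y..z, g t) / (z - y) := (le_div_iff₀ (sub_pos.2 hyz)).2 hyz_ge

theorem concaveOn_intervalIntegral_of_ae_antitoneOn {a b : ℝ} {g : ℝ → ℝ} {A : Set ℝ}
    (hg : IntegrableOn g (Icc a b)) (hA : volume (Icc a b \ A) = 0) (hanti : AntitoneOn g A) :
    ConcaveOn ℝ (Icc a b) fun x => ∫ t in a..x, g t := by
  rw [← neg_convexOn_iff]
  simpa only [Pi.neg_def, ← intervalIntegral.integral_neg] using
    convexOn_intervalIntegral_of_ae_monotoneOn hg.neg hA hanti.neg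

theorem integral_of_ae_monotone_convex_general (a b : ℝ) (g : ℝ → ℝ)
    (hg : IntegrableOn g (Icc a b)) :
    (∀ A : Set ℝ, A ⊆ Icc a b → MeasurableSet A → volume (Icc a b \ A) = 0 →
        MonotoneOn g A → ConvexOn ℝ (Icc a b) (fun x => ∫ t in a..x, g t)) ∧
      (∀ A : Set ℝ, A ⊆ Icc a b → MeasurableSet A → volume (Icc a b \ A) = 0 →
        AntitoneOn g A → ConcaveOn ℝ (Icc a b) (fun x => ∫ t in a..x, g t)) :=
  ⟨fun _ _ _ hA hmono => convexOn_intervalIntegral_of_ae_monotoneOn hg hA hmono,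
    fun _ _ _ hA hanti => concaveOn_intervalIntegral_of_ae_antitoneOn hg hA hanti⟩

/-- **Integral form of the convexity criterion** (Proposition 9). Let `g` be Lebesgue
integrable on `[a, b]` and suppose there is a measurable set `A ⊆ [a, b]` whose
complement in `[a, b]` is Lebesgue null, on which `g` is nondecreasing (resp.
nonincreasing); then `f x := ∫_a^x g` is convex (resp. concave) on `[a, b]`. -/
theorem integral_of_ae_monotone_convex (a b : ℝ) (hab : a < b) (g : ℝ → ℝ)
    (hg : IntegrableOn g (Icc a b)) :
    (∀ A : Set ℝ, A ⊆ Icc a b → MeasurableSet A → volume (Icc a b \ A) = 0 →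
        MonotoneOn g A → ConvexOn ℝ (Icc a b) (fun x => ∫ t in a..x, g t)) ∧
      (∀ A : Set ℝ, A ⊆ Icc a b → MeasurableSet A → volume (Icc a b \ A) = 0 →
        AntitoneOn g A → ConcaveOn ℝ (Icc a b) (fun x => ∫ t in a..x, g t)) :=
  integral_of_ae_monotone_convex_general a b g hg
end
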